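/- Let d, m, s be nonnegative integers with d ≥ max{s, 2} and m ≥ s + 2. Let 𝒜 be a simplicial complex with |V(𝒜)| = d and |𝒜| ≥ 2^d - m + 1, containing exactly d - s sets of size d - 1. Then there exists a nonnegative integer r with 2^r ≤ m - 1 and r ≤ s such that ∑_{F ∈ 𝒜} 1/(|F|+1) ≥ (2^{d+1} - 2)/(d+1) - (s/d + (m-2-s)/(d+1-r)). -/

import Mathlib

/-!
The faces missing from `𝒜` inside the power set of `V = V(𝒜)` form an up-set `M` with at most
`m - 1` members, among them `V` itself and exactly `s` sets of size `d - 1`. If `F` is a smallest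
missing face and `r = d - |F|`, then all `2 ^ r` sets between `F` and `V` are missing, and so are
the `r` sets `V \ {x}` with `x ∉ F`; hence `2 ^ r ≤ m - 1` and `r ≤ s`. In the sum over `M`,
`V` contributes `1 / (d + 1)`, the `s` co-atoms `1 / d` each, and each of the remaining at most
`m - 2 - s` faces at most `1 / (d + 1 - r)`. Subtracting this from the sum over the whole power
set, `(2 ^ (d + 1) - 1) / (d + 1)`, gives the bound.
-/

open Finset

theorem sum_range_choose_div_add_one {K : Type*} [Field K] [CharZero K] (n : ℕ) :
    ∑ k ∈ range (n + 1), (n.choose k : K) / (k + 1) = (2 ^ (n + 1) - 1) / (n + 1) := by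
  have hchoose : ∀ k : ℕ, (n.choose k : K) / (k + 1) = ((n + 1).choose (k + 1) : K) / (n + 1) := by
    intro k
    rw [div_eq_div_iff (by norm_cast) (by norm_cast), mul_comm]
    exact_mod_cast Nat.add_one_mul_choose_eq n k
  have htotal : ∑ k ∈ range (n + 1), ((n + 1).choose (k + 1) : K) = 2 ^ (n + 1) - 1 := by
    have := Nat.sum_range_choose (n + 1)
    rw [sum_range_succ'] at this
    rw [eq_sub_iff_add_eq]
    exact_mod_cast by simpa using this
  simp_rw [hchoose, ← sum_div, htotal]

theorem sum_powerset_one_div_card_add_one {α K : Type*} [Field K] [CharZero K] (V : Finset α) :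
    ∑ F ∈ V.powerset, (1 : K) / (#F + 1) = (2 ^ (#V + 1) - 1) / (#V + 1) := by
  rw [sum_powerset_apply_card (fun k => (1 : K) / (k + 1)), ← sum_range_choose_div_add_one]
  simp_rw [nsmul_eq_mul, mul_one_div]

variable {α : Type*} [DecidableEq α]

theorem card_filter_card_eq_powerset_sdiff {V : Finset α} {A : Finset (Finset α)}
    (hAV : A ⊆ V.powerset) (k : ℕ) :
    #((V.powerset \ A).filter (#· = k)) = (#V).choose k - #(A.filter (#· = k)) := by
  have hlayer : (V.powerset \ A).filter (#· = k) = V.powersetCard k \ A.filter (#· = k) := by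
    ext F; simp only [mem_filter, mem_sdiff, mem_powerset, mem_powersetCard]; tauto
  rw [hlayer, card_sdiff_of_subset, card_powersetCard]
  exact fun F hF =>
    mem_powersetCard.2 ⟨mem_powerset.1 (hAV (mem_filter.1 hF).1), (mem_filter.1 hF).2⟩

theorem two_pow_card_sub_card_le_card {V F : Finset α} {M : Finset (Finset α)}
    (hup : ∀ F ∈ M, ∀ G, F ⊆ G → G ⊆ V → G ∈ M) (hF : F ∈ M) (hFV : F ⊆ V) :
    2 ^ (#V - #F) ≤ #M := by
  rw [← card_Icc_finset hFV]
  exact card_le_card fun G hG => hup F hF G (mem_Icc.1 hG).1 (mem_Icc.1 hG).2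

theorem card_sub_card_le_card_filter {V F : Finset α} {M : Finset (Finset α)}
    (hup : ∀ F ∈ M, ∀ G, F ⊆ G → G ⊆ V → G ∈ M) (hF : F ∈ M) (hFV : F ⊆ V) :
    #V - #F ≤ #(M.filter (#· = #V - 1)) := by
  rw [← card_sdiff_of_subset hFV,
    ← card_image_of_injOn ((erase_injOn V).mono (coe_subset.2 sdiff_subset))]
  refine card_le_card fun G hG => ?_
  obtain ⟨x, hx, rfl⟩ := mem_image.1 hG
  obtain ⟨hxV, hxF⟩ := mem_sdiff.1 hx
  exact mem_filter.2
    ⟨hup F hF _ (subset_erase.2 ⟨hFV, hxF⟩) (erase_subset _ _), card_erase_of_mem hxV⟩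

theorem sum_one_div_card_add_one_le {K : Type*} [Field K] [LinearOrder K] [IsStrictOrderedRing K]
    {V : Finset α} {M : Finset (Finset α)} {k : ℕ}
    (hV : V ∈ M) (hV0 : 0 < #V) (hk : ∀ G ∈ M, k ≤ #G) :
    ∑ G ∈ M, (1 : K) / (#G + 1) ≤ 1 / (#V + 1) + #(M.filter (#· = #V - 1)) / #V
        + (#M - 1 - #(M.filter (#· = #V - 1))) / (k + 1) := by
  set L := M.filter (#· = #V - 1)
  have hVL : V ∉ L := fun h => by have := (mem_filter.1 h).2; omega
  have hB : insert V L ⊆ M := insert_subset hV (filter_subset _ _)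
  have hL : ∑ G ∈ L, (1 : K) / (#G + 1) = #L / #V := by
    rw [sum_congr rfl fun G hG => by rw [(mem_filter.1 hG).2, Nat.cast_pred hV0, sub_add_cancel],
      sum_const, nsmul_eq_mul, mul_one_div]
  have hrest : ∑ G ∈ M \ insert V L, (1 : K) / (#G + 1) ≤ (#M - 1 - #L) / (k + 1) := by
    calc ∑ G ∈ M \ insert V L, (1 : K) / (#G + 1)
        ≤ #(M \ insert V L) • ((1 : K) / (k + 1)) := by
          refine sum_le_card_nsmul _ _ _ fun G hG => one_div_le_one_div_of_le (by positivity) ?_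
          exact_mod_cast Nat.add_le_add_right (hk G (mem_sdiff.1 hG).1) 1
      _ = (#M - 1 - #L) / (k + 1) := by
          have hLM : #L + 1 ≤ #M := card_insert_of_notMem hVL ▸ card_le_card hB
          rw [card_sdiff_of_subset hB, card_insert_of_notMem hVL, nsmul_eq_mul, Nat.cast_sub hLM]
          push_cast; ring
  rw [← sum_sdiff hB, sum_insert hVL, hL]
  linarith

theorem exists_sum_one_div_card_add_one_le {V : Finset α} {M : Finset (Finset α)} {m s : ℕ}
    (hMV : M ⊆ V.powerset) (hup : ∀ F ∈ M, ∀ G, F ⊆ G → G ⊆ V → G ∈ M) (hV0 : 0 < #V)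
    (hM : #M ≤ m - 1) (hs : #(M.filter (#· = #V - 1)) = s) (hm : s + 2 ≤ m) :
    ∃ r : ℕ, 2 ^ r ≤ m - 1 ∧ r ≤ s ∧
      ∑ G ∈ M, (1 : ℚ) / (#G + 1) ≤ 1 / (#V + 1) + s / #V + (m - 2 - s) / (#V + 1 - r) := by
  have hmQ : (s : ℚ) + 2 ≤ m := by exact_mod_cast hm
  obtain rfl | hMne := M.eq_empty_or_nonempty
  · refine ⟨0, by omega, Nat.zero_le s, ?_⟩
    rw [sum_empty, Nat.cast_zero, sub_zero]
    have : (0 : ℚ) ≤ (m - 2 - s) / (#V + 1) := div_nonneg (by linarith) (by positivity)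
    positivity
  obtain ⟨F, hF, hmin⟩ := exists_min_image M card hMne
  have hFV : F ⊆ V := mem_powerset.1 (hMV hF)
  refine ⟨#V - #F, (two_pow_card_sub_card_le_card hup hF hFV).trans hM,
    hs ▸ card_sub_card_le_card_filter hup hF hFV, ?_⟩
  have hsum := sum_one_div_card_add_one_le (K := ℚ) (hup F hF V hFV subset_rfl) hV0 hmin
  have hMQ : (#M : ℚ) + 1 ≤ m := by exact_mod_cast (by omega : #M + 1 ≤ m)
  rw [hs] at hsum
  rw [Nat.cast_sub (card_le_card hFV), show (#V + 1 - (#V - #F) : ℚ) = #F + 1 by ring]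
  have : (#M - 1 - s : ℚ) / (#F + 1) ≤ (m - 2 - s) / (#F + 1) :=
    div_le_div_of_nonneg_right (by linarith) (by positivity)
  linarith

theorem local_lemma_general (d m s : ℕ) (hds : s ≤ d) (hd2 : 2 ≤ d) (hm : s + 2 ≤ m)
    (A : Finset (Finset ℕ))
    (hdc : ∀ X ∈ A, ∀ Y ⊆ X, Y ∈ A)
    (hVcard : (A.sup id).card = d)
    (hAcard : 2 ^ d - m + 1 ≤ A.card)
    (hlayer : (A.filter (fun F => F.card = d - 1)).card = d - s) :
    ∃ r : ℕ, 2 ^ r ≤ m - 1 ∧ r ≤ s ∧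
      ((2 : ℚ) ^ (d + 1) - 2) / ((d : ℚ) + 1) -
          ((s : ℚ) / (d : ℚ) + ((m : ℚ) - 2 - (s : ℚ)) / ((d : ℚ) + 1 - (r : ℚ))) ≤
        ∑ F ∈ A, (1 : ℚ) / ((F.card : ℚ) + 1) := by
  set V := A.sup id
  have hAV : A ⊆ V.powerset := fun F hF => mem_powerset.2 (le_sup (f := id) hF)
  have hup : ∀ F ∈ V.powerset \ A, ∀ G, F ⊆ G → G ⊆ V → G ∈ V.powerset \ A :=
    fun F hF G hFG hGV => mem_sdiff.2
      ⟨mem_powerset.2 hGV, fun hGA => (mem_sdiff.1 hF).2 (hdc G hGA F hFG)⟩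
  have hM : #(V.powerset \ A) ≤ m - 1 := by
    rw [card_sdiff_of_subset hAV, card_powerset, hVcard]; omega
  have hs : #((V.powerset \ A).filter (#· = #V - 1)) = s := by
    rw [card_filter_card_eq_powerset_sdiff hAV, hVcard,
      Nat.choose_symm_of_eq_add (show d = d - 1 + 1 by omega), Nat.choose_one_right, hlayer]
    omega
  obtain ⟨r, hr, hrs, hsum⟩ :=
    exists_sum_one_div_card_add_one_le sdiff_subset hup (by omega) hM hs hm
  refine ⟨r, hr, hrs, ?_⟩
  have hsplit := sum_sdiff hAV (f := fun F => (1 : ℚ) / (#F + 1))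
  rw [sum_powerset_one_div_card_add_one, hVcard] at hsplit
  rw [hVcard] at hsum
  have : ((2 : ℚ) ^ (d + 1) - 2) / (d + 1) = (2 ^ (d + 1) - 1) / (d + 1) - 1 / (d + 1) := by ring
  linarith

theorem local_lemma (d m s : ℕ) (hds : s ≤ d) (hd2 : 2 ≤ d) (hm : s + 2 ≤ m)
    (A : Finset (Finset ℕ)) (hne : A.Nonempty)
    (hdc : ∀ X ∈ A, ∀ Y ⊆ X, Y ∈ A)
    (hVcard : (A.sup id).card = d)
    (hAcard : 2 ^ d - m + 1 ≤ A.card)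
    (hlayer : (A.filter (fun F => F.card = d - 1)).card = d - s) :
    ∃ r : ℕ, 2 ^ r ≤ m - 1 ∧ r ≤ s ∧
      ((2 : ℚ) ^ (d + 1) - 2) / ((d : ℚ) + 1) -
          ((s : ℚ) / (d : ℚ) + ((m : ℚ) - 2 - (s : ℚ)) / ((d : ℚ) + 1 - (r : ℚ))) ≤
        ∑ F ∈ A, (1 : ℚ) / ((F.card : ℚ) + 1) :=
  local_lemma_general d m s hds hd2 hm A hdc hVcard hAcard hlayer
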